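/- arXiv:2012.03073 — 5 statements merged into one kernel-verified Lean document; each statement's English description precedes it below -/
import Mathlib

section
/- Let f, g : X → Y be morphisms of schemes and let i : E(f,g) → X be their equalizer. Then the underlying map of topological spaces of i is injective, and its image is exactly the set of points x ∈ X such that f(x) = g(x) (call this common value y) and the two field homomorphisms κ(y) → κ(x) induced by f and by g agree. -/
/-!
A point `z` of the equalizer `E` gives `κ(i z) → κ(z)` through which the two residue field maps
become equal; since field homomorphisms are injective they already agree at `i z`. Conversely, if
`f` and `g` agree at `x` on points and residue fields, then they agree on the canonical morphism
`Spec κ(x) → X`, which therefore factors through `E` and hits `x`. Injectivity holds because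
equalizers are monomorphisms, and monomorphisms of schemes are injective on points.
-/

open AlgebraicGeometry CategoryTheory CategoryTheory.Limits

namespace AlgebraicGeometry.Scheme

variable {X Y : Scheme}

instance Hom.mono_residueFieldMap (f : X ⟶ Y) (x : X) : Mono (f.residueFieldMap x) :=
  ConcreteCategory.mono_of_injective _ (f.residueFieldMap x).hom.injective

def Hom.eqLocus (f g : X ⟶ Y) : Set X :=
  {x | ∃ h : f.base x = g.base x,
    f.residueFieldMap x = (Y.residueFieldCongr h).hom ≫ g.residueFieldMap x}

lemma Hom.apply_mem_eqLocus_of_comp_eq {Z : Scheme} {f g : X ⟶ Y} (i : Z ⟶ X)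
    (hfg : i ≫ f = i ≫ g) (z : Z) : i z ∈ f.eqLocus g := by
  have hpt : f.base (i z) = g.base (i z) := by
    change (i ≫ f).base z = (i ≫ g).base z
    rw [hfg]
  refine ⟨hpt, ?_⟩
  have hres := Hom.residueFieldMap_congr hfg z
  rw [residueFieldMap_comp, residueFieldMap_comp] at hres
  rw [← cancel_mono (i.residueFieldMap z)]
  simpa using hres

lemma Hom.fromSpecResidueField_comp_eq_of_mem_eqLocus {f g : X ⟶ Y} {x : X}
    (hx : x ∈ f.eqLocus g) : X.fromSpecResidueField x ≫ f = X.fromSpecResidueField x ≫ g := by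
  obtain ⟨_, hres⟩ := hx
  rw [← Hom.SpecMap_residueFieldMap_fromSpecResidueField,
    ← Hom.SpecMap_residueFieldMap_fromSpecResidueField, hres, Spec.map_comp, Category.assoc,
    residueFieldCongr_fromSpecResidueField]

lemma range_equalizer_ι (f g : X ⟶ Y) : Set.range (equalizer.ι f g).base = f.eqLocus g := by
  refine Set.Subset.antisymm ?_ fun x hx => ?_
  · rintro _ ⟨z, rfl⟩
    exact Hom.apply_mem_eqLocus_of_comp_eq _ (equalizer.condition f g) z
  · let φ := equalizer.lift _ (Hom.fromSpecResidueField_comp_eq_of_mem_eqLocus hx)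
    refine ⟨φ.base (IsLocalRing.closedPoint _), ?_⟩
    change (φ ≫ equalizer.ι f g).base _ = x
    rw [equalizer.lift_ι]
    exact fromSpecResidueField_apply x _

end AlgebraicGeometry.Scheme

/-- The underlying map of the equalizer `i : E(f,g) ⟶ X` of two scheme
morphisms `f, g : X ⟶ Y` is injective, and its image is exactly the set of
points `x ∈ X` at which `f` and `g` take the same value `y` and induce the
same field homomorphism `κ(y) → κ(x)` on residue fields. -/
theorem equalizer_injective_and_range {X Y : Scheme} (f g : X ⟶ Y) :
    Function.Injective (equalizer.ι f g).base ∧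
      Set.range (equalizer.ι f g).base =
        {x : X | ∃ h : f.base x = g.base x,
          f.residueFieldMap x =
            (Y.residueFieldCongr h).hom ≫ g.residueFieldMap x} :=
  ⟨(equalizer.ι f g).injective, Scheme.range_equalizer_ι f g⟩
end

section
/- Let S be a scheme, X an S-scheme with structure morphism ρ : X → S, and let f, g : S → X be S-valued points of X, i.e., morphisms with ρ ∘ f = id_S and ρ ∘ g = id_S. Then the underlying map of the equalizer i : E(f,g) → S is injective, and its image is exactly the set {s ∈ S : f(s) = g(s)} of points of S at which the underlying maps of f and g agree. -/
/-!
The equalizer map is a monomorphism, hence injective on points, and its image lies where `f` and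
`g` agree. Conversely, if `f s = g s = x`, then `f♯, g♯ : κ(x) ⟶ κ(s)` are both left inverse to
`ρ♯ : κ(s) ⟶ κ(x)`; a ring map between fields is injective, so each is the two-sided inverse of
`ρ♯`, hence `f♯ = g♯`. Then `f` and `g` agree after composing with `Spec κ(s) ⟶ S`, which thus factors
through the equalizer, and `s` lies in its image.
-/

open AlgebraicGeometry CategoryTheory CategoryTheory.Limits

theorem CategoryTheory.eq_of_comp_eq_id_of_mono {C : Type*} [Category C] {X Y : C} {u : X ⟶ Y}
    {a b : Y ⟶ X} [Mono a] (ha : u ≫ a = 𝟙 X) (hb : u ≫ b = 𝟙 X) : a = b := by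
  have hau : a ≫ u = 𝟙 Y := by
    rw [← cancel_mono a, Category.assoc, ha, Category.id_comp, Category.comp_id]
  calc a = a ≫ u ≫ b := by rw [hb, Category.comp_id]
    _ = b := by rw [← Category.assoc, hau, Category.id_comp]

namespace AlgebraicGeometry.Scheme

variable {S X : Scheme}

lemma residueFieldMap_comp_residueFieldMap_of_comp_eq_id {ρ : X ⟶ S} {f : S ⟶ X}
    (hf : f ≫ ρ = 𝟙 S) (s : S) (e : s = ρ.base (f.base s)) :
    ((S.residueFieldCongr e).hom ≫ ρ.residueFieldMap (f.base s)) ≫ f.residueFieldMap s = 𝟙 _ := by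
  rw [Category.assoc, ← residueFieldMap_comp, Hom.residueFieldMap_congr hf]
  simp only [Hom.id_base, TopCat.hom_id, ContinuousMap.id_apply, residueFieldMap_id,
    Category.comp_id]
  exact (S.residueFieldCongr e).hom_inv_id

lemma residueFieldMap_eq_of_comp_eq_id {ρ : X ⟶ S} {f g : S ⟶ X} (hf : f ≫ ρ = 𝟙 S)
    (hg : g ≫ ρ = 𝟙 S) {s : S} (hs : f.base s = g.base s) :
    f.residueFieldMap s = (X.residueFieldCongr hs).hom ≫ g.residueFieldMap s := by
  have e : s = ρ.base (f.base s) := by rw [← Hom.comp_apply, hf]; rfl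
  have : Mono (f.residueFieldMap s) :=
    ConcreteCategory.mono_of_injective _ (f.residueFieldMap s).hom.injective
  refine eq_of_comp_eq_id_of_mono (residueFieldMap_comp_residueFieldMap_of_comp_eq_id hf s e) ?_
  rw [Category.assoc, Hom.residueFieldMap_congr'_assoc, residueFieldCongr_trans_hom_assoc,
    ← Category.assoc]
  exact residueFieldMap_comp_residueFieldMap_of_comp_eq_id hg s _

lemma fromSpecResidueField_comp_eq_of_residueFieldMap_eq {f g : S ⟶ X} {s : S}
    (hs : f.base s = g.base s)
    (h : f.residueFieldMap s = (X.residueFieldCongr hs).hom ≫ g.residueFieldMap s) :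
    S.fromSpecResidueField s ≫ f = S.fromSpecResidueField s ≫ g := by
  rw [← Hom.SpecMap_residueFieldMap_fromSpecResidueField, h, Spec.map_comp, Category.assoc,
    residueFieldCongr_fromSpecResidueField, Hom.SpecMap_residueFieldMap_fromSpecResidueField]

lemma range_equalizer_ι_subset (f g : S ⟶ X) :
    Set.range (equalizer.ι f g).base ⊆ {s | f.base s = g.base s} := by
  rintro _ ⟨e, rfl⟩
  simpa using congr(($(equalizer.condition f g)).base e)

lemma mem_range_equalizer_ι_of_fromSpecResidueField_comp_eq {f g : S ⟶ X} {s : S}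
    (h : S.fromSpecResidueField s ≫ f = S.fromSpecResidueField s ≫ g) :
    s ∈ Set.range (equalizer.ι f g).base :=
  ⟨equalizer.lift _ h default, by
    rw [← Hom.comp_apply, equalizer.lift_ι, fromSpecResidueField_apply]⟩

end AlgebraicGeometry.Scheme

/-- For two `S`-valued points `f, g : S ⟶ X` of an `S`-scheme `X` (sections of
the structure morphism `ρ : X ⟶ S`), the underlying map of the equalizer
`E(f,g) ⟶ S` is injective with image the set of points where `f` and `g`
agree. -/
theorem equalizer_section_injective_and_range {S X : Scheme} (ρ : X ⟶ S)
    (f g : S ⟶ X) (hf : f ≫ ρ = 𝟙 S) (hg : g ≫ ρ = 𝟙 S) :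
    Function.Injective (equalizer.ι f g).base ∧
      Set.range (equalizer.ι f g).base = {s : S | f.base s = g.base s} :=
  ⟨(equalizer.ι f g).injective, (Scheme.range_equalizer_ι_subset f g).antisymm fun _ hs ↦
    Scheme.mem_range_equalizer_ι_of_fromSpecResidueField_comp_eq <|
      Scheme.fromSpecResidueField_comp_eq_of_residueFieldMap_eq hs <|
        Scheme.residueFieldMap_eq_of_comp_eq_id hf hg hs⟩
end

section
/- Let S be a scheme, X an S-scheme with structure morphism ρ : X → S, and let f, g : S → X be S-valued points of X (morphisms with ρ ∘ f = id_S and ρ ∘ g = id_S). Then f and g are strongly distinct if and only if f(s) ≠ g(s) for every point s ∈ S. -/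
/-!
Suppose `f s = g s = x`. Since `ρ ∘ f = id`, the composite `κ(s) → κ(x) → κ(s)` of residue field
maps along `ρ` and `f` is the identity; as maps of fields are injective, `ρ` induces an isomorphism
`κ(s) ≅ κ(x)`, and `f` and `g` both induce its inverse `κ(x) → κ(s)`. Hence `f` and `g` agree on
`Spec κ(s) → S`, which then factors through the equalizer. Conversely, a point of the equalizer maps
to a point of `S` where `f` and `g` agree.
-/

open AlgebraicGeometry CategoryTheory CategoryTheory.Limits

/-- Two scheme morphisms are *strongly distinct* if their equalizer in the
category of schemes has empty underlying space (equivalently, it is the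
empty scheme). -/
def StronglyDistinct {X Y : Scheme} (f g : X ⟶ Y) : Prop :=
  IsEmpty ↥(equalizer f g)

theorem CategoryTheory.isIso_of_isIso_comp_of_mono {C : Type*} [Category C] {X Y Z : C}
    (f : X ⟶ Y) (g : Y ⟶ Z) [IsIso (f ≫ g)] [Mono g] : IsIso f := by
  have : IsSplitEpi g := .mk' ⟨inv (f ≫ g) ≫ f, by simp⟩
  have : IsIso g := isIso_of_mono_of_isSplitEpi g
  exact IsIso.of_isIso_comp_right f g

namespace AlgebraicGeometry.Scheme

instance {X Y : Scheme} (f : X ⟶ Y) (x : X) : Mono (f.residueFieldMap x) :=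
  ConcreteCategory.mono_of_injective _ (f.residueFieldMap x).hom.injective

theorem isIso_residueFieldMap_of_comp_eq_id {X S : Scheme} {ρ : X ⟶ S} {f : S ⟶ X}
    (hf : f ≫ ρ = 𝟙 S) (s : S) : IsIso (ρ.residueFieldMap (f s)) := by
  have : IsIso (ρ.residueFieldMap (f s) ≫ f.residueFieldMap s) := by
    rw [← residueFieldMap_comp, Hom.residueFieldMap_congr hf, residueFieldMap_id]
    exact IsIso.comp_isIso' (Iso.isIso_hom _) (IsIso.id _)
  exact isIso_of_isIso_comp_of_mono _ (f.residueFieldMap s)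

theorem eq_of_SpecMap_comp_fromSpecResidueField_comp_eq {X S : Scheme} (ρ : X ⟶ S) {x : X}
    [Epi (ρ.residueFieldMap x)] {K : CommRingCat} {φ₁ φ₂ : X.residueField x ⟶ K}
    (h : Spec.map φ₁ ≫ X.fromSpecResidueField x ≫ ρ = Spec.map φ₂ ≫ X.fromSpecResidueField x ≫ ρ) :
    φ₁ = φ₂ := by
  simp only [← Hom.SpecMap_residueFieldMap_fromSpecResidueField, ← Spec.map_comp_assoc,
    cancel_mono, Spec.map_inj] at h
  exact (cancel_epi _).1 h

end AlgebraicGeometry.Scheme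

/-- For `S`-valued points `f, g : S ⟶ X` of an `S`-scheme `X`, strong
distinctness is equivalent to `f` and `g` disagreeing at every point of `S`. -/
theorem stronglyDistinct_iff_ne_at_all_points {S X : Scheme} (ρ : X ⟶ S)
    (f g : S ⟶ X) (hf : f ≫ ρ = 𝟙 S) (hg : g ≫ ρ = 𝟙 S) :
    StronglyDistinct f g ↔ ∀ s : S, f.base s ≠ g.base s := by
  constructor
  · intro hempty s hs
    have := Scheme.isIso_residueFieldMap_of_comp_eq_id hf s
    have hφ : f.residueFieldMap s = (X.residueFieldCongr hs).hom ≫ g.residueFieldMap s := by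
      apply Scheme.eq_of_SpecMap_comp_fromSpecResidueField_comp_eq ρ
      simp [Spec.map_comp, hf, hg]
    have hagree : S.fromSpecResidueField s ≫ f = S.fromSpecResidueField s ≫ g := by
      rw [← Scheme.Hom.SpecMap_residueFieldMap_fromSpecResidueField f,
        ← Scheme.Hom.SpecMap_residueFieldMap_fromSpecResidueField g, hφ, Spec.map_comp,
        Category.assoc, Scheme.residueFieldCongr_fromSpecResidueField]
    exact hempty.false (equalizer.lift _ hagree (IsLocalRing.closedPoint _))
  · exact fun H ↦ ⟨fun t ↦ H (equalizer.ι f g t) congr($(equalizer.condition f g) t)⟩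
end

section
/- Let R be a Dedekind domain that is not a field, with fraction field K, and fix an integer n ≥ 1. Let A be an n × n matrix with entries in K whose determinant det(A) is nonzero. Then the following are equivalent: (1) for every nonzero prime ideal 𝔭 of R (every height one prime), n divides ord_𝔭(det(A)), and for all indices i, j with A_{i,j} ≠ 0 one has n · ord_𝔭(A_{i,j}) ≥ ord_𝔭(det(A)); (2) there exists a nonzero fractional ideal I of R in K such that every entry A_{i,j} lies in I and the fractional ideal generated by det(A) equals I^n, i.e., span_R{det(A)} = I^n. -/
open IsDedekindDomain
open scoped Classical

/-- The normalized additive `𝔭`-adic valuation `ord_𝔭` on the fraction field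
of a Dedekind domain: `ord v x` is the exponent of `v` in the factorization
of the fractional ideal `xR` (and `0` by convention when `x = 0`). -/
noncomputable def ord {R : Type*} [CommRing R] [IsDomain R] [IsDedekindDomain R]
    {K : Type*} [Field K] [Algebra R K] [IsFractionRing R K]
    (v : HeightOneSpectrum R) (x : K) : ℤ :=
  if h : x = 0 then 0
  else -Multiplicative.toAdd
    (WithZero.unzero ((Valuation.ne_zero_iff (v.valuation K)).mpr h))

/-! `ord_𝔭 x` is the multiplicity of `𝔭` in the fractional ideal `(x)`. Nonzero fractional ideals
of a Dedekind domain correspond exactly to finitely supported families of multiplicities, and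
`x ∈ I` iff `count_𝔭 I ≤ ord_𝔭 x` for all `𝔭`. Hence the conditions say precisely that
`I := ∏ 𝔭 ^ (ord_𝔭(det A) / n)` satisfies `I ^ n = (det A)` and contains every entry; conversely,
`I ^ n = (det A)` forces `ord_𝔭(det A) = n · count_𝔭 I`. -/

section

open FractionalIdeal IsLocalization WithZero
open scoped nonZeroDivisors

variable {R : Type*} [CommRing R] [IsDedekindDomain R]
    {K : Type*} [Field K] [Algebra R K] [IsFractionRing R K]

namespace FractionalIdeal

variable (K) in
lemma coeIdeal_zpow_le_one (v : HeightOneSpectrum R) {k : ℤ} (hk : 0 ≤ k) :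
    (v.asIdeal : FractionalIdeal R⁰ K) ^ k ≤ 1 := by
  lift k to ℕ using hk
  rw [zpow_natCast, ← coeIdeal_pow]
  exact coeIdeal_le_one

lemma le_one_of_forall_count_nonneg {F : FractionalIdeal R⁰ K} (hF : F ≠ 0)
    (h : ∀ v : HeightOneSpectrum R, 0 ≤ count K v F) : F ≤ 1 := by
  rw [← finprod_heightOneSpectrum_factorization' K hF]
  exact finprod_induction (· ≤ 1) le_rfl (fun a b ha hb => mul_le_one' ha hb)
    fun v => coeIdeal_zpow_le_one K v (h v)

lemma le_iff_forall_count_le {F G : FractionalIdeal R⁰ K} (hF : F ≠ 0) (hG : G ≠ 0) :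
    F ≤ G ↔ ∀ v : HeightOneSpectrum R, count K v G ≤ count K v F := by
  refine ⟨fun h v => count_mono K v hF h, fun h => ?_⟩
  have hFG : F * G⁻¹ ≤ 1 := by
    apply le_one_of_forall_count_nonneg (mul_ne_zero hF (inv_ne_zero hG))
    intro v
    rw [count_mul K v hF (inv_ne_zero hG), count_inv]
    linarith [h v]
  calc F = G * (F * G⁻¹) := by rw [mul_comm F, ← mul_assoc, mul_inv_cancel₀ hG, one_mul]
    _ ≤ G * 1 := mul_le_mul_right hFG G
    _ = G := mul_one G

lemma eq_of_forall_count_eq {F G : FractionalIdeal R⁰ K} (hF : F ≠ 0) (hG : G ≠ 0)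
    (h : ∀ v : HeightOneSpectrum R, count K v F = count K v G) : F = G := by
  rw [← finprod_heightOneSpectrum_factorization' K hF,
    ← finprod_heightOneSpectrum_factorization' K hG]
  simp only [h]

variable (K) in
lemma exists_forall_count_eq (e : HeightOneSpectrum R → ℤ)
    (he : ∀ᶠ v in Filter.cofinite, e v = 0) :
    ∃ I : FractionalIdeal R⁰ K, I ≠ 0 ∧ ∀ v, count K v I = e v :=
  ⟨∏ᶠ v, (v.asIdeal : FractionalIdeal R⁰ K) ^ e v,
    finprod_ne_zero fun v => zpow_ne_zero _ (coeIdeal_ne_zero.mpr v.ne_bot),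
    fun v => count_finprod K v e he⟩

end FractionalIdeal

lemma ord_mk' (v : HeightOneSpectrum R) {m : R} (hm : m ≠ 0) (d : R⁰) :
    ord v (mk' K m d) =
      ((Associates.mk v.asIdeal).count (Associates.mk (Ideal.span {m})).factors : ℤ) -
        (Associates.mk v.asIdeal).count (Associates.mk (Ideal.span {(d : R)})).factors := by
  have hx : mk' K m d ≠ 0 := IsFractionRing.mk'_eq_zero_iff_eq_zero.not.mpr hm
  rw [ord, dif_neg hx, toAdd_unzero_eq_log, HeightOneSpectrum.valuation_of_mk',
    v.intValuation_if_neg hm, v.intValuation_if_neg (nonZeroDivisors.coe_ne_zero d),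
    ← exp_sub, log_exp]
  ring

lemma ord_eq_count (v : HeightOneSpectrum R) {x : K} (hx : x ≠ 0) :
    ord v x = count K v (spanSingleton R⁰ x) := by
  obtain ⟨⟨m, d⟩, rfl⟩ := mk'_surjective R⁰ x
  have hm : m ≠ 0 := by
    rintro rfl
    exact hx (mk'_zero _)
  have hspan : spanSingleton R⁰ (mk' K m d)
      = spanSingleton R⁰ (algebraMap R K d)⁻¹ * (Ideal.span {m} : Ideal R) := by
    rw [coeIdeal_span_singleton, spanSingleton_mul_spanSingleton,
      IsFractionRing.mk'_eq_div, div_eq_mul_inv, mul_comm]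
  rw [ord_mk' v hm, count_well_defined K v (spanSingleton_ne_zero_iff.mpr hx) hspan]

lemma ord_eventually_eq_zero {x : K} (hx : x ≠ 0) :
    ∀ᶠ v : HeightOneSpectrum R in Filter.cofinite, ord v x = 0 := by
  filter_upwards [finite_factors (spanSingleton R⁰ x)] with v hv
  rwa [ord_eq_count v hx]

lemma mem_iff_forall_count_le_ord {I : FractionalIdeal R⁰ K} (hI : I ≠ 0) {x : K}
    (hx : x ≠ 0) :
    x ∈ I ↔ ∀ v : HeightOneSpectrum R, count K v I ≤ ord v x := by
  simp only [← spanSingleton_le_iff_mem, ord_eq_count _ hx,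
    le_iff_forall_count_le (spanSingleton_ne_zero_iff.mpr hx) hI]

end

theorem matrix_ord_conditions_iff_fractionalIdeal_general
    {R : Type*} [CommRing R] [IsDomain R] [IsDedekindDomain R]
    {K : Type*} [Field K] [Algebra R K] [IsFractionRing R K]
    {n : ℕ} (A : Matrix (Fin n) (Fin n) K) (hA : A.det ≠ 0) :
    (∀ v : HeightOneSpectrum R,
        (n : ℤ) ∣ ord v A.det ∧
        ∀ i j, A i j ≠ 0 → (n : ℤ) * ord v (A i j) ≥ ord v A.det) ↔
    (∃ I : FractionalIdeal (nonZeroDivisors R) K, I ≠ 0 ∧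
        (∀ i j, A i j ∈ I) ∧
        FractionalIdeal.spanSingleton (nonZeroDivisors R) A.det = I ^ n) := by
  have hD : FractionalIdeal.spanSingleton (nonZeroDivisors R) A.det ≠ 0 :=
    FractionalIdeal.spanSingleton_ne_zero_iff.mpr hA
  constructor
  · intro h
    have hdiv v : (n : ℤ) * (ord v A.det / n) = ord v A.det := Int.mul_ediv_cancel' (h v).1
    obtain ⟨I, hI, hcount⟩ := FractionalIdeal.exists_forall_count_eq (R := R) K
      (fun v => ord v A.det / n)
      ((ord_eventually_eq_zero hA).mono fun v hv => by rw [hv, Int.zero_ediv])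
    refine ⟨I, hI, fun i j => ?_, ?_⟩
    · by_cases hij : A i j = 0
      · exact hij ▸ I.zero_mem
      refine (mem_iff_forall_count_le_ord hI hij).mpr fun v => ?_
      have hle := (h v).2 i j hij
      rw [← hdiv v] at hle
      rw [hcount]
      exact le_of_mul_le_mul_left hle (Int.natCast_pos.mpr (Fin.pos i))
    · refine FractionalIdeal.eq_of_forall_count_eq hD (pow_ne_zero n hI) fun v => ?_
      rw [FractionalIdeal.count_pow, hcount, hdiv, ord_eq_count v hA]
  · rintro ⟨I, hI, hmem, hpow⟩ v
    have hord : ord v A.det = n * FractionalIdeal.count K v I := by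
      rw [ord_eq_count v hA, hpow, FractionalIdeal.count_pow]
    refine ⟨⟨_, hord⟩, fun i j hij => ?_⟩
    rw [hord, ge_iff_le]
    exact mul_le_mul_of_nonneg_left ((mem_iff_forall_count_le_ord hI hij).mp (hmem i j) v)
      (Int.natCast_nonneg n)

/-- Let `R` be a Dedekind domain which is not a field, with fraction field
`K`, and let `A` be an `n × n` matrix over `K` with nonzero determinant.
Then `n ∣ ord_𝔭(det A)` and `n · ord_𝔭(A i j) ≥ ord_𝔭(det A)` (for all
nonzero entries `A i j`) hold at every height one prime `𝔭` if and only if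
there is a nonzero fractional ideal `I` of `R` containing all entries of `A`
such that the fractional ideal generated by `det A` equals `I ^ n`. -/
theorem matrix_ord_conditions_iff_fractionalIdeal
    {R : Type*} [CommRing R] [IsDomain R] [IsDedekindDomain R]
    (hR : ¬ IsField R)
    {K : Type*} [Field K] [Algebra R K] [IsFractionRing R K]
    {n : ℕ} (hn : 1 ≤ n) (A : Matrix (Fin n) (Fin n) K) (hA : A.det ≠ 0) :
    (∀ v : HeightOneSpectrum R,
        (n : ℤ) ∣ ord v A.det ∧
        ∀ i j, A i j ≠ 0 → (n : ℤ) * ord v (A i j) ≥ ord v A.det) ↔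
    (∃ I : FractionalIdeal (nonZeroDivisors R) K, I ≠ 0 ∧
        (∀ i j, A i j ∈ I) ∧
        FractionalIdeal.spanSingleton (nonZeroDivisors R) A.det = I ^ n) :=
  matrix_ord_conditions_iff_fractionalIdeal_general A hA
end

section
/- Let R be a local ring. For pairs u = (u₀, u₁) and v = (v₀, v₁) of elements of R, write Δ(u,v) = u₀v₁ − u₁v₀. Let a, b, c, d ∈ R × R be four pairs such that all six pairwise determinants Δ(a,b), Δ(a,c), Δ(a,d), Δ(b,c), Δ(b,d), Δ(c,d) are units of R, and let M be any 2 × 2 matrix over R with det(M) ∈ R^× satisfying M·a = u·(1,0), M·b = v·(0,1), M·c = w·(1,1) for some units u, v, w ∈ R^×. Then M·d = t·(z, 1) for some unit t ∈ R^×, where z = Δ(a,c)·Δ(b,d)·(Δ(a,d)·Δ(b,c))⁻¹ is the cross-ratio (a,b; c,d). -/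
open Matrix

/-- The determinant `Δ(u,v) = u₀v₁ - u₁v₀` of a pair of pairs. -/
def pairDet {R : Type*} [CommRing R] (u v : R × R) : R :=
  u.1 * v.2 - u.2 * v.1

/-- The cross-ratio `(a,b; c,d) = Δ(a,c)·Δ(b,d)·(Δ(a,d)·Δ(b,c))⁻¹` of four
pairs, where the inverse is taken via `Ring.inverse`. -/
noncomputable def crossRatio {R : Type*} [CommRing R] (a b c d : R × R) : R :=
  pairDet a c * pairDet b d * Ring.inverse (pairDet a d * pairDet b c)

/-!
A `2 × 2` matrix `M` multiplies every determinant `Δ(p,q)` by `det M`, so when `det M` is a unit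
the cross-ratio is unchanged by `M`. Hence `(a,b; c,d) = ((u,0),(0,v); (w,w),(x₀,x₁))` for
`(x₀,x₁) = M·d`, and a direct computation gives `x₀ / x₁` for the latter; finally
`u·x₁ = det M · Δ(a,d)` shows that `x₁` is a unit.
-/

section

variable {R : Type*} [CommRing R]

def Matrix.mulVecPair (M : Matrix (Fin 2) (Fin 2) R) (p : R × R) : R × R :=
  ((M *ᵥ ![p.1, p.2]) 0, (M *ᵥ ![p.1, p.2]) 1)

theorem pairDet_mulVecPair (M : Matrix (Fin 2) (Fin 2) R) (p q : R × R) :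
    pairDet (M.mulVecPair p) (M.mulVecPair q) = M.det * pairDet p q := by
  simp only [pairDet, mulVecPair, mulVec, dotProduct, Fin.sum_univ_two, det_fin_two,
    cons_val_zero, cons_val_one, cons_val_fin_one]
  ring

theorem crossRatio_mulVecPair {M : Matrix (Fin 2) (Fin 2) R} (hM : IsUnit M.det)
    (a b c d : R × R) :
    crossRatio (M.mulVecPair a) (M.mulVecPair b) (M.mulVecPair c) (M.mulVecPair d) =
      crossRatio a b c d := by
  have hM2 : IsUnit (M.det * M.det) := hM.mul hM
  simp only [crossRatio, pairDet_mulVecPair]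
  calc M.det * pairDet a c * (M.det * pairDet b d) *
        Ring.inverse (M.det * pairDet a d * (M.det * pairDet b c))
      = pairDet a c * pairDet b d * Ring.inverse (pairDet a d * pairDet b c) *
          (Ring.inverse (M.det * M.det) * (M.det * M.det)) := by
        rw [show M.det * pairDet a d * (M.det * pairDet b c)
            = pairDet a d * pairDet b c * (M.det * M.det) by ring, Ring.mul_inverse_rev]
        ring
    _ = _ := by rw [Ring.inverse_mul_cancel _ hM2, mul_one]

theorem crossRatio_standard (u v w : Rˣ) (x : R × R) :
    crossRatio ((u : R), 0) (0, (v : R)) ((w : R), (w : R)) x = x.1 * Ring.inverse x.2 := by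
  set e : Rˣ := -(u * v * w)
  have hnum : pairDet ((u : R), 0) ((w : R), (w : R)) * pairDet (0, (v : R)) x = x.1 * e := by
    simp only [pairDet, e, Units.val_neg, Units.val_mul]
    ring
  have hden : pairDet ((u : R), 0) x * pairDet (0, (v : R)) ((w : R), (w : R)) = x.2 * e := by
    simp only [pairDet, e, Units.val_neg, Units.val_mul]
    ring
  calc crossRatio ((u : R), 0) (0, (v : R)) ((w : R), (w : R)) x
      = x.1 * e * Ring.inverse (x.2 * e) := by rw [crossRatio, hnum, hden]
    _ = x.1 * Ring.inverse x.2 * (e * e⁻¹ : Rˣ) := by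
        rw [Ring.mul_inverse_rev, Ring.inverse_unit, Units.val_mul]
        ring
    _ = x.1 * Ring.inverse x.2 := by simp

end

theorem matrix_sends_d_to_crossRatio_general {R : Type*} [CommRing R]
    (a b c d : R × R)
    (had : IsUnit (pairDet a d))
    (M : Matrix (Fin 2) (Fin 2) R) (hM : IsUnit M.det)
    (u v w : Rˣ)
    (ha : M.mulVec ![a.1, a.2] = ![(u : R), 0])
    (hb : M.mulVec ![b.1, b.2] = ![0, (v : R)])
    (hc : M.mulVec ![c.1, c.2] = ![(w : R), (w : R)]) :
    ∃ t : Rˣ, M.mulVec ![d.1, d.2] = ![(t : R) * crossRatio a b c d, (t : R)] := by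
  have hMa : M.mulVecPair a = ((u : R), 0) := by simp [mulVecPair, ha]
  have hMb : M.mulVecPair b = (0, (v : R)) := by simp [mulVecPair, hb]
  have hMc : M.mulVecPair c = ((w : R), (w : R)) := by simp [mulVecPair, hc]
  set x := M *ᵥ ![d.1, d.2]
  have hx1 : IsUnit (x 1) := by
    have h := pairDet_mulVecPair M a d
    rw [hMa] at h
    simp only [pairDet, mulVecPair, zero_mul, sub_zero] at h
    exact (u.isUnit_units_mul _).mp (h ▸ hM.mul had)
  have hz : crossRatio a b c d = x 0 * Ring.inverse (x 1) := by
    rw [← crossRatio_mulVecPair hM, hMa, hMb, hMc, crossRatio_standard]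
    rfl
  refine ⟨hx1.unit, ?_⟩
  rw [hz, IsUnit.unit_spec, mul_left_comm, Ring.mul_inverse_cancel _ hx1, mul_one]
  exact (FinVec.etaExpand_eq x).symm

/-- Over a local ring `R`, if `a, b, c, d` are four pairs with all pairwise
determinants units, and `M` is a `2 × 2` matrix with unit determinant
sending `a, b, c` to unit multiples of `(1,0)`, `(0,1)`, `(1,1)`, then `M`
sends `d` to a unit multiple of `(z, 1)`, where `z` is the cross-ratio
`(a,b; c,d)`. -/
theorem matrix_sends_d_to_crossRatio {R : Type*} [CommRing R]
    [IsLocalRing R] (a b c d : R × R)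
    (hab : IsUnit (pairDet a b)) (hac : IsUnit (pairDet a c))
    (had : IsUnit (pairDet a d)) (hbc : IsUnit (pairDet b c))
    (hbd : IsUnit (pairDet b d)) (hcd : IsUnit (pairDet c d))
    (M : Matrix (Fin 2) (Fin 2) R) (hM : IsUnit M.det)
    (u v w : Rˣ)
    (ha : M.mulVec ![a.1, a.2] = ![(u : R), 0])
    (hb : M.mulVec ![b.1, b.2] = ![0, (v : R)])
    (hc : M.mulVec ![c.1, c.2] = ![(w : R), (w : R)]) :
    ∃ t : Rˣ, M.mulVec ![d.1, d.2] = ![(t : R) * crossRatio a b c d, (t : R)] :=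
  matrix_sends_d_to_crossRatio_general a b c d had M hM u v w ha hb hc
end
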